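/- Let K be a number field. For every B ≥ 1, the set {H(α) : α ∈ K^×, H(α) ≤ B} is finite. -/

import Mathlib

open Polynomial IntermediateField

/-- The Mahler measure of an algebraic number `α`:
`|A| * ∏ max(1,|αᵢ|)` where `A` is the leading coefficient of the primitive
integer minimal polynomial of `α` and the `αᵢ` are the conjugates of `α`. -/
noncomputable def mahlerMeasure (α : ℂ) : ℝ :=
  |((IsLocalization.integerNormalization (nonZeroDivisors ℤ) (minpoly ℚ α)).primPart.leadingCoeff : ℝ)| *
    (((minpoly ℚ α).aroots ℂ).map (fun z => max 1 ‖z‖)).prod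

/-- The absolute Weil height: `H(α) = M(α)^(1/[ℚ(α):ℚ])`. -/
noncomputable def weilHeight (α : ℂ) : ℝ :=
  mahlerMeasure α ^ ((1 : ℝ) / (minpoly ℚ α).natDegree)

/-- `ζ` is a root of unity. -/
def IsRootOfUnity (ζ : ℂ) : Prop := ∃ k : ℕ, 0 < k ∧ ζ ^ k = 1

/-- The Galois closure `K_α` of `ℚ(α)` over `ℚ`, inside `ℂ`. -/
noncomputable def galClosure (α : ℂ) : IntermediateField ℚ ℂ :=
  normalClosure ℚ ℚ⟮α⟯ ℂ

/-- The metric Mahler measure of Dubickas–Smyth. -/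
noncomputable def metricMahler (α : ℂ) : ℝ :=
  sInf {x : ℝ | ∃ (N : ℕ) (a : Fin N → ℂ), (∀ n, a n ≠ 0 ∧ IsAlgebraic ℚ (a n)) ∧
    α = ∏ n, a n ∧ x = ∏ n, mahlerMeasure (a n)}

/-- The ultrametric Mahler measure. -/
noncomputable def ultraMahler (α : ℂ) : ℝ :=
  sInf {x : ℝ | ∃ (N : ℕ) (a : Fin (N + 1) → ℂ), (∀ n, a n ≠ 0 ∧ IsAlgebraic ℚ (a n)) ∧
    α = ∏ n, a n ∧ x = Finset.univ.sup' Finset.univ_nonempty (fun n => mahlerMeasure (a n))}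

/-- `q(α) = inf { H(x) : x ∈ K_α^×, x not a root of unity }`. -/
noncomputable def qmin (α : ℂ) : ℝ :=
  sInf {h : ℝ | ∃ x : ℂ, x ∈ galClosure α ∧ x ≠ 0 ∧ ¬ IsRootOfUnity x ∧ h = weilHeight x}

lemma aux_one_le_mprod (s : Multiset ℝ) (h : ∀ x ∈ s, 1 ≤ x) : 1 ≤ s.prod := by
  induction s using Multiset.induction_on with
  | empty => simp
  | cons a s ih =>
    rw [Multiset.prod_cons]
    have ha := h a (Multiset.mem_cons_self a s)
    have hs := ih (fun x hx => h x (Multiset.mem_cons_of_mem hx))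
    nlinarith

lemma aux_single_le_mprod (s : Multiset ℝ) (h : ∀ x ∈ s, 1 ≤ x) : ∀ x ∈ s, x ≤ s.prod := by
  induction s using Multiset.induction_on with
  | empty => simp
  | cons a s ih =>
    intro x hx
    rw [Multiset.prod_cons]
    have ha := h a (Multiset.mem_cons_self a s)
    have hs := aux_one_le_mprod s (fun y hy => h y (Multiset.mem_cons_of_mem hy))
    rcases Multiset.mem_cons.mp hx with rfl | hx'
    · nlinarith
    · have := ih (fun y hy => h y (Multiset.mem_cons_of_mem hy)) x hx'
      have hx1 := h x hx
      nlinarith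

section Aux

variable (α : ℂ)

lemma aux_q_ne_zero (h : IsIntegral ℚ α) :
    IsLocalization.integerNormalization (nonZeroDivisors ℤ) (minpoly ℚ α) ≠ 0 := by
  intro h0
  obtain ⟨b, hb⟩ := IsLocalization.integerNormalization_map_to_map (nonZeroDivisors ℤ) (minpoly ℚ α)
  rw [h0, Polynomial.map_zero] at hb
  have hb0 : (b : ℤ) ≠ 0 := nonZeroDivisors.coe_ne_zero b
  exact smul_ne_zero hb0 (minpoly.ne_zero h) hb.symm

lemma aux_primPart_ne_zero (h : IsIntegral ℚ α) :
    (IsLocalization.integerNormalization (nonZeroDivisors ℤ) (minpoly ℚ α)).primPart ≠ 0 := by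
  intro h0
  apply aux_q_ne_zero α h
  rw [(IsLocalization.integerNormalization (nonZeroDivisors ℤ) (minpoly ℚ α)).eq_C_content_mul_primPart,
    h0, mul_zero]

lemma aux_lead_ne_zero (h : IsIntegral ℚ α) :
    (IsLocalization.integerNormalization (nonZeroDivisors ℤ) (minpoly ℚ α)).primPart.leadingCoeff ≠ 0 :=
  fun h0 => aux_primPart_ne_zero α h (leadingCoeff_eq_zero.mp h0)

lemma aux_aeval (h : IsIntegral ℚ α) :
    aeval α (IsLocalization.integerNormalization (nonZeroDivisors ℤ) (minpoly ℚ α)).primPart = 0 := by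
  set q := IsLocalization.integerNormalization (nonZeroDivisors ℤ) (minpoly ℚ α) with hq
  have haq : aeval α q = 0 :=
    IsLocalization.integerNormalization_aeval_eq_zero (nonZeroDivisors ℤ) (minpoly ℚ α) (minpoly.aeval ℚ α)
  have hc : (algebraMap ℤ ℂ q.content) ≠ 0 := by
    simpa using Polynomial.content_eq_zero_iff.not.mpr (aux_q_ne_zero α h)
  rw [q.eq_C_content_mul_primPart, map_mul, aeval_C] at haq
  exact (mul_eq_zero.mp haq).resolve_left hc

lemma aux_one_le_factors : ∀ x ∈ ((minpoly ℚ α).aroots ℂ).map (fun z => max 1 ‖z‖), (1:ℝ) ≤ x := by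
  intro x hx
  obtain ⟨w, hw, rfl⟩ := Multiset.mem_map.mp hx
  exact le_max_left _ _

lemma aux_one_le_abs_lead (h : IsIntegral ℚ α) :
    1 ≤ |((IsLocalization.integerNormalization (nonZeroDivisors ℤ) (minpoly ℚ α)).primPart.leadingCoeff : ℝ)| := by
  have := aux_lead_ne_zero α h
  exact_mod_cast Int.one_le_abs (by exact_mod_cast this)

lemma aux_abs_lead_le_mahler (h : IsIntegral ℚ α) :
    |((IsLocalization.integerNormalization (nonZeroDivisors ℤ) (minpoly ℚ α)).primPart.leadingCoeff : ℝ)| ≤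
      mahlerMeasure α := by
  unfold _root_.mahlerMeasure
  nth_rewrite 1 [← mul_one (|((IsLocalization.integerNormalization (nonZeroDivisors ℤ) (minpoly ℚ α)).primPart.leadingCoeff : ℝ)|)]
  exact mul_le_mul_of_nonneg_left (aux_one_le_mprod _ (aux_one_le_factors α)) (abs_nonneg _)

lemma aux_one_le_mahler (h : IsIntegral ℚ α) : 1 ≤ mahlerMeasure α :=
  le_trans (aux_one_le_abs_lead α h) (aux_abs_lead_le_mahler α h)

lemma aux_root_bound (h : IsIntegral ℚ α) {z : ℂ} (hz : z ∈ (minpoly ℚ α).aroots ℂ) :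
    |((IsLocalization.integerNormalization (nonZeroDivisors ℤ) (minpoly ℚ α)).primPart.leadingCoeff : ℝ)| *
      ‖z‖ ≤ mahlerMeasure α := by
  have h2 : max 1 ‖z‖ ≤ (((minpoly ℚ α).aroots ℂ).map (fun z => max 1 ‖z‖)).prod :=
    aux_single_le_mprod _ (aux_one_le_factors α) _ (Multiset.mem_map_of_mem (fun z => max 1 ‖z‖) hz)
  exact mul_le_mul_of_nonneg_left (le_trans (le_max_right _ _) h2) (abs_nonneg _)

end Aux

theorem height_bounded_finite (K : IntermediateField ℚ ℂ) [FiniteDimensional ℚ K]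
    (B : ℝ) (hB : 1 ≤ B) :
    {x : ℝ | ∃ α : ℂ, α ∈ K ∧ α ≠ 0 ∧ weilHeight α ≤ B ∧ x = weilHeight α}.Finite := by
  haveI : NumberField K := ⟨⟩
  set d := Module.finrank ℚ K with hd
  have hT : {x : K | IsIntegral ℤ x ∧ ∀ φ : K →+* ℂ, ‖φ x‖ ≤ B ^ d}.Finite :=
    NumberField.Embeddings.finite_of_norm_le K ℂ (B ^ d)
  have hI : (Set.Icc (⌈-(B^d)⌉ : ℤ) ⌊B^d⌋).Finite := Set.finite_Icc _ _
  set S : Set ℂ := {α : ℂ | α ∈ K ∧ α ≠ 0 ∧ weilHeight α ≤ B} with hS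
  -- key facts for each α ∈ S
  have key : ∀ α ∈ S, IsIntegral ℚ α ∧
      |((IsLocalization.integerNormalization (nonZeroDivisors ℤ) (minpoly ℚ α)).primPart.leadingCoeff : ℝ)| ≤ B ^ d ∧
      (∀ z ∈ (minpoly ℚ α).aroots ℂ,
        |((IsLocalization.integerNormalization (nonZeroDivisors ℤ) (minpoly ℚ α)).primPart.leadingCoeff : ℝ)| *
          ‖z‖ ≤ B ^ d) := by
    rintro α ⟨hαK, hα0, hH⟩
    have hintK : IsIntegral ℚ (⟨α, hαK⟩ : K) := IsIntegral.of_finite ℚ _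
    have hint : IsIntegral ℚ α := hintK.map (IsScalarTower.toAlgHom ℚ K ℂ)
    have hmp : minpoly ℚ α = minpoly ℚ (⟨α, hαK⟩ : K) := by
      have h := minpoly.algebraMap_eq (A := ℚ) (algebraMap K ℂ).injective (⟨α, hαK⟩ : K)
      simpa using h
    have hn1 : 0 < (minpoly ℚ α).natDegree := minpoly.natDegree_pos hint
    have hnd : (minpoly ℚ α).natDegree ≤ d := by
      rw [hmp]; exact minpoly.natDegree_le _
    have hM1 : 1 ≤ mahlerMeasure α := aux_one_le_mahler α hint
    have hMB : mahlerMeasure α ≤ B ^ d := by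
      have hne : ((minpoly ℚ α).natDegree : ℝ) ≠ 0 := Nat.cast_ne_zero.mpr hn1.ne'
      have h1 : mahlerMeasure α = (weilHeight α) ^ ((minpoly ℚ α).natDegree) := by
        rw [weilHeight, ← Real.rpow_natCast (mahlerMeasure α ^ ((1:ℝ) / (minpoly ℚ α).natDegree)),
          ← Real.rpow_mul (by linarith), one_div_mul_cancel hne, Real.rpow_one]
      have hH0 : 0 ≤ weilHeight α := Real.rpow_nonneg (by linarith) _
      calc mahlerMeasure α = (weilHeight α) ^ ((minpoly ℚ α).natDegree) := h1
        _ ≤ B ^ ((minpoly ℚ α).natDegree) := pow_le_pow_left₀ hH0 hH _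
        _ ≤ B ^ d := pow_le_pow_right₀ hB hnd
    exact ⟨hint, le_trans (aux_abs_lead_le_mahler α hint) hMB,
      fun z hz => le_trans (aux_root_bound α hint hz) hMB⟩
  have hSfin : S.Finite := by
    set f : ℂ → ℤ × ℂ := fun α =>
      ((IsLocalization.integerNormalization (nonZeroDivisors ℤ) (minpoly ℚ α)).primPart.leadingCoeff,
        (((IsLocalization.integerNormalization (nonZeroDivisors ℤ) (minpoly ℚ α)).primPart.leadingCoeff : ℂ)) * α)
      with hf
    apply Set.Finite.of_finite_image (f := f) ?_ ?_
    · apply Set.Finite.subset (hI.prod (hT.image (fun x : K => (x : ℂ))))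
      rintro _ ⟨α, hαS, rfl⟩
      obtain ⟨hαK, hα0, hH⟩ := hαS
      obtain ⟨hint, hlead, hroots⟩ := key α ⟨hαK, hα0, hH⟩
      set a : ℤ := (IsLocalization.integerNormalization (nonZeroDivisors ℤ) (minpoly ℚ α)).primPart.leadingCoeff
        with ha
      have hmp : minpoly ℚ α = minpoly ℚ (⟨α, hαK⟩ : K) := by
        have h := minpoly.algebraMap_eq (A := ℚ) (algebraMap K ℂ).injective (⟨α, hαK⟩ : K)
        simpa using h
      rw [Set.mem_prod]
      constructor
      · -- first coordinate in Icc
        show a ∈ Set.Icc (⌈-(B^d)⌉ : ℤ) ⌊B^d⌋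
        rw [Set.mem_Icc]
        have h1 : |(a : ℝ)| ≤ B ^ d := hlead
        rw [abs_le] at h1
        exact ⟨Int.ceil_le.mpr h1.1, Int.le_floor.mpr h1.2⟩
      · -- second coordinate
        show (a : ℂ) * α ∈ (fun x : K => (x : ℂ)) '' {x : K | IsIntegral ℤ x ∧ ∀ φ : K →+* ℂ, ‖φ x‖ ≤ B ^ d}
        refine ⟨a • (⟨α, hαK⟩ : K), ⟨?_, ?_⟩, ?_⟩
        · -- integral
          have hintC : IsIntegral ℤ ((a : ℤ) • α) :=
            isIntegral_leadingCoeff_smul _ _ (aux_aeval α hint)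
          have : algebraMap K ℂ (a • (⟨α, hαK⟩ : K)) = (a : ℤ) • α := by
            rw [map_zsmul]; rfl
          exact (isIntegral_algebraMap_iff (algebraMap K ℂ).injective).mp (this ▸ hintC)
        · -- conjugate bounds
          intro φ
          have hroot : φ (⟨α, hαK⟩ : K) ∈ (minpoly ℚ α).aroots ℂ := by
            rw [Polynomial.mem_aroots]
            refine ⟨minpoly.ne_zero hint, ?_⟩
            rw [hmp]
            have := Polynomial.aeval_algHom_apply φ.toRatAlgHom (⟨α, hαK⟩ : K)
              (minpoly ℚ (⟨α, hαK⟩ : K))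
            rw [minpoly.aeval, map_zero] at this
            exact this
          have := hroots _ hroot
          rw [map_zsmul]
          rw [zsmul_eq_mul, norm_mul]
          simpa [Complex.norm_intCast] using this
        · -- coercion equality
          show algebraMap K ℂ (a • (⟨α, hαK⟩ : K)) = (a : ℂ) * α
          rw [map_zsmul, zsmul_eq_mul]; rfl
    · rintro α ⟨hαK, hα0, hH⟩ β ⟨hβK, hβ0, hHβ⟩ hfe
      obtain ⟨hintα, -, -⟩ := key α ⟨hαK, hα0, hH⟩
      have h1 := congrArg Prod.fst hfe
      have h2 := congrArg Prod.snd hfe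
      simp only [hf] at h1 h2
      have ha0 : ((IsLocalization.integerNormalization (nonZeroDivisors ℤ) (minpoly ℚ α)).primPart.leadingCoeff : ℂ) ≠ 0 := by
        exact_mod_cast aux_lead_ne_zero α hintα
      rw [← h1] at h2
      exact mul_left_cancel₀ ha0 h2
  have himg : {x : ℝ | ∃ α : ℂ, α ∈ K ∧ α ≠ 0 ∧ weilHeight α ≤ B ∧ x = weilHeight α} ⊆ weilHeight '' S := by
    rintro x ⟨α, h1, h2, h3, rfl⟩
    exact ⟨α, ⟨h1, h2, h3⟩, rfl⟩
  exact (hSfin.image weilHeight).subset himg
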